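/- arXiv:2605.05777 — 2 statements merged into one kernel-verified Lean document; each statement's English description precedes it below -/
import Mathlib

section
/- Consider a Zipf distribution on ℕ₊ with parameter α > 1, i.e., P(i) = i^{−α}/ζ(α) where ζ(α) = Σ_{j=1}^∞ j^{−α}. Then the expected missing mass after k i.i.d. samples satisfies 𝔼[U_k] = Σ_{i=1}^∞ P(i)·(1 − P(i))^k, and there exist constants C > 0 and k₀ such that for all k > k₀, 𝔼[U_k] ≤ C·k^{−(α−1)/α}. -/
/-!
Every term satisfies `q (1 - q)^k ≤ min (1/k) q` with `q ≤ i^{-α}`. Cutting the series at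
`N = ⌈k^{1/α}⌉`, the first `N` terms contribute at most `N / k ≈ k^{-(α-1)/α}`, and the tail is at
most `∑_{i > N} i^{-α} ≤ N^{1-α} / (α - 1) ≈ k^{-(α-1)/α}`. The tail bound telescopes the
discrete form `p (x + 1)^{-(p+1)} ≤ x^{-p} - (x + 1)^{-p}` of `(x^{-p})' = -p x^{-(p+1)}`, which
comes from `1 + p s ≤ e^{p s} ≤ (1 - s)^{-p}` at `s = 1 / (x + 1)`.
-/

/-- Zipf probability `P(i) = i^{−α}/ζ(α)` on the positive integers. -/
noncomputable def zipf (α : ℝ) (i : ℕ+) : ℝ :=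
  ((i : ℕ) : ℝ) ^ (-α) / ∑' j : ℕ+, ((j : ℕ) : ℝ) ^ (-α)

open Real Finset

theorem one_add_mul_le_one_sub_rpow_neg {p s : ℝ} (hp : 0 ≤ p) (hs : s < 1) :
    1 + p * s ≤ (1 - s) ^ (-p) :=
  calc 1 + p * s ≤ exp (p * s) := by linarith [add_one_le_exp (p * s)]
    _ = exp (-s) ^ (-p) := by rw [← exp_mul]; ring_nf
    _ ≤ (1 - s) ^ (-p) :=
      rpow_le_rpow_of_nonpos (by linarith) (by linarith [add_one_le_exp (-s)]) (by linarith)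

theorem mul_rpow_neg_add_one_le_sub {p x : ℝ} (hp : 0 ≤ p) (hx : 0 < x) :
    p * (x + 1) ^ (-(p + 1)) ≤ x ^ (-p) - (x + 1) ^ (-p) := by
  have hx1 : 0 < x + 1 := by linarith
  have h := one_add_mul_le_one_sub_rpow_neg hp (show 1 / (x + 1) < 1 by
    rw [div_lt_one hx1]; linarith)
  rw [show 1 - 1 / (x + 1) = x * (x + 1)⁻¹ by field_simp; ring,
    mul_rpow hx.le (inv_nonneg.2 hx1.le), inv_rpow hx1.le, ← rpow_neg hx1.le, neg_neg] at h
  have hc : (x + 1) ^ p * (x + 1) ^ (-p) = 1 := by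
    rw [← rpow_add hx1]; simp
  have := mul_le_mul_of_nonneg_right h (rpow_nonneg hx1.le (-p))
  rw [mul_assoc, hc, mul_one] at this
  rw [show -(p + 1) = -p - 1 by ring, rpow_sub_one hx1.ne']
  linarith [show p * (1 / (x + 1)) * (x + 1) ^ (-p) = p * ((x + 1) ^ (-p) / (x + 1)) by ring]

theorem mul_sum_range_rpow_neg_le {p x : ℝ} (hp : 0 ≤ p) (hx : 0 < x) (m : ℕ) :
    p * ∑ n ∈ range m, (x + n + 1) ^ (-(p + 1)) ≤ x ^ (-p) - (x + m) ^ (-p) := by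
  induction m with
  | zero => simp
  | succ m ih =>
    have := mul_rpow_neg_add_one_le_sub hp (show 0 < x + m by positivity)
    rw [sum_range_succ, mul_add, Nat.cast_succ, ← add_assoc]
    linarith

theorem tsum_le_rpow_neg_div {p x : ℝ} (hp : 0 < p) (hx : 0 < x) {g : ℕ → ℝ}
    (hg0 : ∀ n, 0 ≤ g n) (hg : ∀ n, g n ≤ (x + n + 1) ^ (-(p + 1))) :
    ∑' n, g n ≤ x ^ (-p) / p := by
  refine tsum_le_of_sum_range_le hg0 fun m => ?_
  rw [le_div_iff₀ hp, mul_comm]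
  have := mul_le_mul_of_nonneg_left (sum_le_sum fun n (_ : n ∈ range m) => hg n) hp.le
  linarith [mul_sum_range_rpow_neg_le hp.le hx m, rpow_nonneg (by positivity : 0 ≤ x + m) (-p)]

theorem natCast_mul_mul_one_sub_pow_le_one {q : ℝ} (hq0 : 0 ≤ q) (hq1 : q ≤ 1) (k : ℕ) :
    k * (q * (1 - q) ^ k) ≤ 1 :=
  calc k * (q * (1 - q) ^ k) ≤ (1 + k * q) * (1 - q) ^ k := by
        nlinarith [pow_nonneg (sub_nonneg.2 hq1) k]
    _ ≤ (1 + q) ^ k * (1 - q) ^ k := by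
        gcongr
        exact one_add_mul_le_pow (by linarith) k
    _ = (1 - q ^ 2) ^ k := by rw [← mul_pow]; ring
    _ ≤ 1 := pow_le_one₀ (by nlinarith) (by nlinarith)

theorem tsum_le_natCast_mul_add_rpow_neg {α a : ℝ} (hα : 1 < α) {f : ℕ → ℝ}
    (hf0 : ∀ n, 0 ≤ f n) (hfa : ∀ n, f n ≤ a) (hf : ∀ n, f n ≤ ((n : ℝ) + 1) ^ (-α))
    {N : ℕ} (hN : 0 < N) :
    ∑' n, f n ≤ N * a + (N : ℝ) ^ (-(α - 1)) / (α - 1) := by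
  have hsum : Summable f := by
    refine .of_nonneg_of_le hf0 hf ?_
    simpa using (summable_nat_add_iff 1).2 (summable_nat_rpow.2 (by linarith : -α < -1))
  rw [← hsum.sum_add_tsum_nat_add N]
  gcongr
  · simpa using sum_le_sum fun n (_ : n ∈ range N) => hfa n
  · refine tsum_le_rpow_neg_div (by linarith) (by positivity) (fun n => hf0 _) fun n => ?_
    simpa [add_comm, add_left_comm, add_assoc] using hf (n + N)

theorem natCeil_rpow_inv_mul_inv_add_le {α k : ℝ} (hα : 1 < α) (hk : 1 ≤ k) :
    (⌈k ^ α⁻¹⌉₊ : ℝ) * k⁻¹ + (⌈k ^ α⁻¹⌉₊ : ℝ) ^ (-(α - 1)) / (α - 1)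
      ≤ (2 + 1 / (α - 1)) * k ^ (-(α - 1) / α) := by
  have hk0 : 0 < k := by linarith
  set r := k ^ α⁻¹
  have hr1 : 1 ≤ r := one_le_rpow hk (by positivity)
  have hrN : r ≤ ⌈r⌉₊ := Nat.le_ceil r
  have hNr : (⌈r⌉₊ : ℝ) ≤ 2 * r := by linarith [Nat.ceil_lt_add_one (by linarith : 0 ≤ r)]
  have hhead : (⌈r⌉₊ : ℝ) * k⁻¹ ≤ 2 * k ^ (-(α - 1) / α) := by
    have hr : r * k⁻¹ = k ^ (-(α - 1) / α) := by
      rw [show -(α - 1) / α = α⁻¹ - 1 by field_simp; ring, rpow_sub_one hk0.ne', div_eq_mul_inv]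
    rw [← hr, ← mul_assoc]
    exact mul_le_mul_of_nonneg_right hNr (by positivity)
  have htail : (⌈r⌉₊ : ℝ) ^ (-(α - 1)) ≤ k ^ (-(α - 1) / α) :=
    calc (⌈r⌉₊ : ℝ) ^ (-(α - 1)) ≤ r ^ (-(α - 1)) :=
          rpow_le_rpow_of_nonpos (by linarith) hrN (by linarith)
      _ = k ^ (-(α - 1) / α) := by rw [← rpow_mul hk0.le]; congr 1; field_simp
  have hα0 : 0 < α - 1 := by linarith
  calc (⌈r⌉₊ : ℝ) * k⁻¹ + (⌈r⌉₊ : ℝ) ^ (-(α - 1)) / (α - 1)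
      ≤ 2 * k ^ (-(α - 1) / α) + k ^ (-(α - 1) / α) / (α - 1) := by gcongr
    _ = (2 + 1 / (α - 1)) * k ^ (-(α - 1) / α) := by ring

theorem tsum_mul_one_sub_pow_le {α : ℝ} (hα : 1 < α) {q : ℕ → ℝ} (hq0 : ∀ n, 0 ≤ q n)
    (hq : ∀ n, q n ≤ ((n : ℝ) + 1) ^ (-α)) {k : ℕ} (hk : 0 < k) :
    ∑' n, q n * (1 - q n) ^ k ≤ (2 + 1 / (α - 1)) * (k : ℝ) ^ (-(α - 1) / α) := by
  have hq1 (n : ℕ) : q n ≤ 1 :=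
    (hq n).trans (rpow_le_one_of_one_le_of_nonpos (by linarith [n.cast_nonneg (α := ℝ)])
      (by linarith))
  have hk1 : (1 : ℝ) ≤ k := by exact_mod_cast hk
  have hterm_le_inv (n : ℕ) : q n * (1 - q n) ^ k ≤ (k : ℝ)⁻¹ := by
    rw [← one_div, le_div_iff₀ (by linarith), mul_comm]
    exact natCast_mul_mul_one_sub_pow_le_one (hq0 n) (hq1 n) k
  have hterm_le_rpow (n : ℕ) : q n * (1 - q n) ^ k ≤ ((n : ℝ) + 1) ^ (-α) :=
    (mul_le_of_le_one_right (hq0 n)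
      (pow_le_one₀ (sub_nonneg.2 (hq1 n)) (by linarith [hq0 n]))).trans (hq n)
  refine (tsum_le_natCast_mul_add_rpow_neg hα
    (fun n => mul_nonneg (hq0 n) (pow_nonneg (sub_nonneg.2 (hq1 n)) k)) hterm_le_inv
    hterm_le_rpow (N := ⌈(k : ℝ) ^ α⁻¹⌉₊) ?_).trans (natCeil_rpow_inv_mul_inv_add_le hα hk1)
  exact Nat.ceil_pos.2 (by positivity)

theorem one_le_tsum_pnat_rpow_neg {α : ℝ} (hα : 1 < α) :
    1 ≤ ∑' j : ℕ+, ((j : ℕ) : ℝ) ^ (-α) := by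
  have hsum : Summable fun j : ℕ+ => ((j : ℕ) : ℝ) ^ (-α) :=
    (summable_nat_rpow.2 (by linarith)).comp_injective PNat.coe_injective
  simpa using hsum.le_tsum 1 fun j _ => by positivity

theorem zipf_nonneg (α : ℝ) (i : ℕ+) : 0 ≤ zipf α i := by
  unfold zipf; positivity

theorem zipf_le_rpow_neg {α : ℝ} (hα : 1 < α) (i : ℕ+) : zipf α i ≤ ((i : ℕ) : ℝ) ^ (-α) :=
  div_le_self (by positivity) (one_le_tsum_pnat_rpow_neg hα)

/-- For a Zipf distribution with parameter `α > 1`, the expected missing mass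
`𝔼[U_k] = Σ_i P(i)(1 − P(i))^k` satisfies `𝔼[U_k] ≤ C·k^{−(α−1)/α}` for all
large `k`, for some constant `C > 0`. -/
theorem stmt_7 (α : ℝ) (hα : 1 < α) :
    ∃ C > (0 : ℝ), ∃ k₀ : ℕ, ∀ k : ℕ, k₀ < k →
      ∑' i : ℕ+, zipf α i * (1 - zipf α i) ^ k
        ≤ C * (k : ℝ) ^ (-(α - 1) / α) := by
  refine ⟨2 + 1 / (α - 1), by have := sub_pos.2 hα; positivity, 0, fun k hk => ?_⟩
  rw [← Equiv.pnatEquivNat.symm.tsum_eq]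
  refine tsum_mul_one_sub_pow_le hα (fun n => zipf_nonneg α _) (fun n => ?_) hk
  simpa using zipf_le_rpow_neg hα n.succPNat
end

section
/- Let P be a Zipf distribution with parameter α > 1 on ℕ₊ (P(i) = i^{−α}/ζ(α)) and define the concentration function H(v) = Σ_{i : P(i) ≤ v} P(i). Then there exist constants c₁, c₂ > 0 such that for all sufficiently small v > 0, c₁·v^{(α−1)/α} ≤ H(v) ≤ c₂·v^{(α−1)/α}. In particular, liminf_{v→0} ln H(v) / ln v = (α−1)/α, so the parameter β = liminf_{v→0} ln H(v)/ln v satisfies β ≥ (α−1)/α. -/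
open scoped Classical

/-- The concentration function `H(v) = Σ_{i : P(i) ≤ v} P(i)` of a distribution. -/
noncomputable def concFn (P : ℕ+ → ℝ) (v : ℝ) : ℝ :=
  ∑' i : ℕ+, (if P i ≤ v then P i else 0)

/-!
Since `i ↦ P(i)` is decreasing, `P(i) ≤ v` holds exactly for `i ≥ N := ⌈(v ζ(α))^{-1/α}⌉`, so
`ζ(α) H(v)` is the tail `∑_{i ≥ N} i^{-α}` of the zeta series. The integral test squeezes this
tail between `N^{1-α}/(α-1)` and `α N^{1-α}/(α-1)`, and `N^{1-α}` is comparable to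
`(v ζ(α))^{(α-1)/α}`. Taking logarithms of the two-sided bound, `ln H(v) / ln v → (α-1)/α`.
-/

open Filter Real Set Topology

lemma tsum_pnat_ite_le_eq_tsum_nat_add {M : Type*} [AddCommMonoid M] [TopologicalSpace M]
    (f : ℕ → M) {N : ℕ} (hN : 1 ≤ N) :
    ∑' i : ℕ+, (if N ≤ (i : ℕ) then f i else 0) = ∑' n : ℕ, f (n + N) := by
  let g : ℕ → ℕ+ := fun n => ⟨n + N, by omega⟩
  have hg : Function.Injective g := fun a b h => by simpa [g] using congrArg PNat.val h
  have hsupp : Function.support (fun i : ℕ+ => if N ≤ (i : ℕ) then f i else 0) ⊆ range g := by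
    intro i hi
    have hNi : N ≤ (i : ℕ) := by by_contra h; simp [h] at hi
    exact ⟨i - N, PNat.coe_injective (by simp [g]; omega)⟩
  rw [← hg.tsum_eq hsupp]
  simp [g]

section Tail

variable {α : ℝ} {N : ℕ}

lemma integral_Ioi_rpow_neg (hα : 1 < α) (hN : 1 ≤ N) :
    ∫ t in Ioi (N : ℝ), t ^ (-α) = (N : ℝ) ^ (1 - α) / (α - 1) := by
  rw [integral_Ioi_rpow_of_lt (by linarith) (by exact_mod_cast hN), neg_div, ← div_neg]
  ring_nf

lemma rpow_one_sub_div_le_tsum_rpow_neg_nat_add (hα : 1 < α) (hN : 1 ≤ N) :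
    (N : ℝ) ^ (1 - α) / (α - 1) ≤ ∑' n : ℕ, ((n + N : ℕ) : ℝ) ^ (-α) := by
  rw [← integral_Ioi_rpow_neg hα hN]
  exact AntitoneOn.integral_le_tsum_comp_add N
    ((antitoneOn_rpow_Ioi_of_exponent_nonpos (by linarith)).mono
      (Ici_subset_Ioi.mpr (by exact_mod_cast hN)))
    (summable_nat_rpow.mpr (by linarith))
    fun t ht => rpow_nonneg ((Nat.cast_nonneg N).trans ht.le) _

lemma tsum_rpow_neg_nat_add_le (hα : 1 < α) (hN : 1 ≤ N) :
    ∑' n : ℕ, ((n + N : ℕ) : ℝ) ^ (-α) ≤ α / (α - 1) * (N : ℝ) ^ (1 - α) := by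
  have hN' : (1 : ℝ) ≤ N := by exact_mod_cast hN
  have hsumm : Summable fun n : ℕ => ((n + N : ℕ) : ℝ) ^ (-α) :=
    (summable_nat_add_iff N).mpr (summable_nat_rpow.mpr (by linarith))
  have htail : ∑' n : ℕ, ((n + N + 1 : ℕ) : ℝ) ^ (-α) ≤ (N : ℝ) ^ (1 - α) / (α - 1) := by
    rw [← integral_Ioi_rpow_neg hα hN]
    exact AntitoneOn.tsum_comp_add_le_integral N
      ((antitoneOn_rpow_Ioi_of_exponent_nonpos (by linarith)).mono
        (Ici_subset_Ioi.mpr (by linarith)))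
      (integrableOn_Ioi_rpow_of_lt (by linarith) (by linarith))
      fun t ht => rpow_nonneg ((Nat.cast_nonneg N).trans ht.le) _
  have hfirst : (N : ℝ) ^ (-α) ≤ (N : ℝ) ^ (1 - α) :=
    rpow_le_rpow_of_exponent_le hN' (by linarith)
  rw [hsumm.tsum_eq_zero_add]
  simp only [zero_add, add_right_comm _ 1 N] at htail ⊢
  calc _ ≤ (N : ℝ) ^ (1 - α) + (N : ℝ) ^ (1 - α) / (α - 1) := add_le_add hfirst htail
    _ = α / (α - 1) * (N : ℝ) ^ (1 - α) := by field_simp [(by linarith : α - 1 ≠ 0)]; ring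

end Tail

lemma rpow_neg_le_iff_rpow_neg_inv_le {α a b : ℝ} (hα : 0 < α) (ha : 0 < a) (hb : 0 < b) :
    a ^ (-α) ≤ b ↔ b ^ (-α⁻¹) ≤ a := by
  conv_rhs => rw [← rpow_rpow_inv ha.le (neg_ne_zero.mpr hα.ne'), inv_neg]
  exact (rpow_le_rpow_iff_of_neg hb (by positivity) (by simpa using hα)).symm

lemma two_rpow_mul_rpow_le_natCeil_rpow {x p : ℝ} (hx : 1 ≤ x) (hp : p ≤ 0) :
    2 ^ p * x ^ p ≤ (⌈x⌉₊ : ℝ) ^ p := by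
  rw [← mul_rpow zero_le_two (by linarith)]
  exact rpow_le_rpow_of_nonpos (by positivity) (Nat.ceil_lt_two_mul (by linarith)).le hp

noncomputable def zipfNormalizer (α : ℝ) : ℝ := ∑' j : ℕ+, ((j : ℕ) : ℝ) ^ (-α)

lemma zipfNormalizer_pos {α : ℝ} (hα : 1 < α) : 0 < zipfNormalizer α :=
  ((summable_nat_rpow.mpr (by linarith)).comp_injective PNat.coe_injective).tsum_pos
    (fun _ => rpow_nonneg (Nat.cast_nonneg _) _) 1 (by simp)

lemma zipf_le_iff {α v : ℝ} (hα : 1 < α) (hv : 0 < v) (i : ℕ+) :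
    zipf α i ≤ v ↔ ⌈(v * zipfNormalizer α) ^ (-α⁻¹)⌉₊ ≤ (i : ℕ) := by
  rw [zipf, ← zipfNormalizer, div_le_iff₀ (zipfNormalizer_pos hα),
    rpow_neg_le_iff_rpow_neg_inv_le (by linarith) (by simp)
      (mul_pos hv (zipfNormalizer_pos hα)), Nat.ceil_le]

lemma concFn_zipf_eq {α v : ℝ} (hα : 1 < α) (hv : 0 < v) :
    concFn (zipf α) v = (∑' n : ℕ,
      ((n + ⌈(v * zipfNormalizer α) ^ (-α⁻¹)⌉₊ : ℕ) : ℝ) ^ (-α)) / zipfNormalizer α := by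
  have hN : 1 ≤ ⌈(v * zipfNormalizer α) ^ (-α⁻¹)⌉₊ :=
    Nat.ceil_pos.mpr (rpow_pos_of_pos (mul_pos hv (zipfNormalizer_pos hα)) _)
  rw [concFn, ← tsum_pnat_ite_le_eq_tsum_nat_add (fun n : ℕ => (n : ℝ) ^ (-α)) hN,
    ← tsum_div_const]
  refine tsum_congr fun i => ?_
  simp only [zipf_le_iff hα hv]
  split_ifs
  · rfl
  · rw [zero_div]

lemma concFn_zipf_bounds {α : ℝ} (hα : 1 < α) :
    ∃ c₁ > (0 : ℝ), ∃ c₂ > (0 : ℝ), ∃ v₀ > (0 : ℝ), ∀ v : ℝ, 0 < v → v < v₀ →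
      c₁ * v ^ ((α - 1) / α) ≤ concFn (zipf α) v ∧
      concFn (zipf α) v ≤ c₂ * v ^ ((α - 1) / α) := by
  set Z := zipfNormalizer α
  set θ := (α - 1) / α
  have hZ : 0 < Z := zipfNormalizer_pos hα
  have hα₁ : 0 < α - 1 := by linarith
  refine ⟨2 ^ (1 - α) * Z ^ θ / ((α - 1) * Z), by positivity,
    α * Z ^ θ / ((α - 1) * Z), by positivity, Z⁻¹, by positivity, fun v hv hvZ => ?_⟩
  have hw : 0 < v * Z := mul_pos hv hZ
  set x := (v * Z) ^ (-α⁻¹)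
  have hx : 1 ≤ x := one_le_rpow_of_pos_of_le_one_of_nonpos hw
    (by simpa [hZ.ne'] using (mul_lt_mul_of_pos_right hvZ hZ).le) (by simp; linarith)
  have hxθ : x ^ (1 - α) = Z ^ θ * v ^ θ := by
    rw [← rpow_mul hw.le, show -α⁻¹ * (1 - α) = θ by simp only [θ]; field_simp; ring, mul_comm v,
      mul_rpow hZ.le hv.le]
  have hN : 1 ≤ ⌈x⌉₊ := Nat.one_le_cast.mp (hx.trans (Nat.le_ceil x))
  have hceil_le : (⌈x⌉₊ : ℝ) ^ (1 - α) ≤ x ^ (1 - α) :=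
    rpow_le_rpow_of_nonpos (by linarith) (Nat.le_ceil x) (by linarith)
  have hceil_ge := two_rpow_mul_rpow_le_natCeil_rpow hx (show 1 - α ≤ 0 by linarith)
  rw [concFn_zipf_eq hα hv]
  constructor
  · calc 2 ^ (1 - α) * Z ^ θ / ((α - 1) * Z) * v ^ θ
          = 2 ^ (1 - α) * x ^ (1 - α) / (α - 1) / Z := by rw [hxθ]; field_simp
      _ ≤ _ := by
          gcongr
          exact (div_le_div_of_nonneg_right hceil_ge hα₁.le).trans
            (rpow_one_sub_div_le_tsum_rpow_neg_nat_add hα hN)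
  · calc _ ≤ α / (α - 1) * x ^ (1 - α) / Z := by
          gcongr
          exact (tsum_rpow_neg_nat_add_le hα hN).trans
            (mul_le_mul_of_nonneg_left hceil_le (by positivity))
      _ = α * Z ^ θ / ((α - 1) * Z) * v ^ θ := by rw [hxθ]; field_simp

lemma tendsto_log_div_log_of_rpow_bounds {f : ℝ → ℝ} {θ c₁ c₂ v₀ : ℝ} (hc₁ : 0 < c₁)
    (hc₂ : 0 < c₂) (hv₀ : 0 < v₀)
    (hf : ∀ v, 0 < v → v < v₀ → c₁ * v ^ θ ≤ f v ∧ f v ≤ c₂ * v ^ θ) :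
    Tendsto (fun v => log (f v) / log v) (𝓝[>] 0) (𝓝 θ) := by
  have hlim (c : ℝ) : Tendsto (fun v => θ + log c / log v) (𝓝[>] 0) (𝓝 θ) := by
    simpa using (tendsto_const_nhds.div_atBot tendsto_log_nhdsGT_zero).const_add θ
  refine tendsto_of_tendsto_of_tendsto_of_le_of_le' (hlim c₂) (hlim c₁) ?_ ?_ <;>
    filter_upwards [Ioo_mem_nhdsGT (lt_min hv₀ one_pos)] with v ⟨hv, hvlt⟩
  all_goals
    have hlogv : log v < 0 := log_neg hv (hvlt.trans_le (min_le_right _ _))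
    have hlog (c : ℝ) (hc : 0 < c) : log (c * v ^ θ) / log v = θ + log c / log v := by
      rw [log_mul hc.ne' (rpow_pos_of_pos hv θ).ne', log_rpow hv]
      field_simp [hlogv.ne]
      ring
    obtain ⟨hlow, hup⟩ := hf v hv (hvlt.trans_le (min_le_left _ _))
    have hfpos : 0 < f v := (by positivity : 0 < c₁ * v ^ θ).trans_le hlow
  · rw [← hlog c₂ hc₂]
    exact div_le_div_of_nonpos_of_le hlogv.le (log_le_log hfpos hup)
  · rw [← hlog c₁ hc₁]
    exact div_le_div_of_nonpos_of_le hlogv.le (log_le_log (by positivity) hlow)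

/-- For a Zipf distribution with parameter `α > 1`, the concentration function is of
order `v^{(α−1)/α}` for small `v`; consequently `β = liminf_{v→0} ln H(v)/ln v`
equals `(α−1)/α`, and in particular `β ≥ (α−1)/α`. -/
theorem stmt_8 (α : ℝ) (hα : 1 < α) :
    (∃ c₁ > (0 : ℝ), ∃ c₂ > (0 : ℝ), ∃ v₀ > (0 : ℝ), ∀ v : ℝ, 0 < v → v < v₀ →
      c₁ * v ^ ((α - 1) / α) ≤ concFn (zipf α) v ∧
      concFn (zipf α) v ≤ c₂ * v ^ ((α - 1) / α)) ∧
    Filter.liminf (fun v : ℝ => Real.log (concFn (zipf α) v) / Real.log v)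
        (nhdsWithin 0 (Set.Ioi 0)) = (α - 1) / α ∧
    (α - 1) / α ≤ Filter.liminf (fun v : ℝ => Real.log (concFn (zipf α) v) / Real.log v)
        (nhdsWithin 0 (Set.Ioi 0)) := by
  obtain ⟨c₁, hc₁, c₂, hc₂, v₀, hv₀, hbounds⟩ := concFn_zipf_bounds hα
  have hlim := tendsto_log_div_log_of_rpow_bounds hc₁ hc₂ hv₀ hbounds
  exact ⟨⟨c₁, hc₁, c₂, hc₂, v₀, hv₀, hbounds⟩, hlim.liminf_eq, hlim.liminf_eq.ge⟩
end
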